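/- Let S be a set and let A and B be families of nonempty subsets of S. Then ⌊A ⊔ B⌋ = ⌊(A ∩ B) ∪ ((A \ B) ⊔ (B \ A))⌋. In particular, if A ⊆ B then ⌊A ⊔ B⌋ = ⌊A⌋. -/

import Mathlib

/-- `A ⊔ B = {a ∪ b | a ∈ A, b ∈ B}`. -/
def sqcupFam {S : Type} (A B : Set (Set S)) : Set (Set S) :=
  {c | ∃ a ∈ A, ∃ b ∈ B, c = a ∪ b}

/-- `⌊X⌋`: the `⊆`-minimal elements of a family of sets. -/
def mins {S : Type} (X : Set (Set S)) : Set (Set S) :=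
  {x ∈ X | ∀ y ∈ X, y ⊆ x → y = x}

/-! Both identities are instances of one principle: if `D ⊆ C` and every member of `C` contains
a member of `D`, then `C` and `D` have the same minimal elements. A union `a ∪ b` with `a ∈ B`
(or `b ∈ A`) contains the member `a` (or `b`) of `A ∩ B`, so only the unions with `a ∈ A \ B`
and `b ∈ B \ A` survive besides `A ∩ B = {x ∪ x | x ∈ A ∩ B}`. -/

section

variable {S : Type}

theorem mins_eq_of_subset_of_coinitial {C D : Set (Set S)} (hDC : D ⊆ C)
    (hcoinit : ∀ c ∈ C, ∃ d ∈ D, d ⊆ c) : mins C = mins D := by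
  ext x
  constructor
  · rintro ⟨hxC, hmin⟩
    obtain ⟨d, hdD, hdx⟩ := hcoinit x hxC
    obtain rfl : d = x := hmin d (hDC hdD) hdx
    exact ⟨hdD, fun y hyD hyx => hmin y (hDC hyD) hyx⟩
  · rintro ⟨hxD, hmin⟩
    refine ⟨hDC hxD, fun y hyC hyx => ?_⟩
    obtain ⟨d, hdD, hdy⟩ := hcoinit y hyC
    obtain rfl : d = x := hmin d hdD (hdy.trans hyx)
    exact hyx.antisymm hdy

theorem inter_subset_sqcupFam (A B : Set (Set S)) : A ∩ B ⊆ sqcupFam A B :=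
  fun x ⟨hxA, hxB⟩ => ⟨x, hxA, x, hxB, (Set.union_self x).symm⟩

theorem sqcupFam_mono {A A' B B' : Set (Set S)} (hA : A' ⊆ A) (hB : B' ⊆ B) :
    sqcupFam A' B' ⊆ sqcupFam A B :=
  fun _ ⟨a, ha, b, hb, hc⟩ => ⟨a, hA ha, b, hB hb, hc⟩

theorem exists_inter_union_sqcupFam_diff_subset {A B : Set (Set S)} {c : Set S}
    (hc : c ∈ sqcupFam A B) : ∃ d ∈ (A ∩ B) ∪ sqcupFam (A \ B) (B \ A), d ⊆ c := by
  obtain ⟨a, haA, b, hbB, rfl⟩ := hc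
  by_cases haB : a ∈ B
  · exact ⟨a, Or.inl ⟨haA, haB⟩, Set.subset_union_left⟩
  by_cases hbA : b ∈ A
  · exact ⟨b, Or.inl ⟨hbA, hbB⟩, Set.subset_union_right⟩
  exact ⟨a ∪ b, Or.inr ⟨a, ⟨haA, haB⟩, b, ⟨hbB, hbA⟩, rfl⟩, subset_rfl⟩

end

theorem mins_sqcup_general {S : Type} (A B : Set (Set S)) :
    mins (sqcupFam A B) = mins ((A ∩ B) ∪ sqcupFam (A \ B) (B \ A)) ∧
    (A ⊆ B → mins (sqcupFam A B) = mins A) := by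
  refine ⟨?_, fun hAB => ?_⟩
  · refine mins_eq_of_subset_of_coinitial ?_ fun c hc => exists_inter_union_sqcupFam_diff_subset hc
    exact Set.union_subset (inter_subset_sqcupFam A B)
      (sqcupFam_mono Set.sdiff_subset Set.sdiff_subset)
  · refine mins_eq_of_subset_of_coinitial ?_ fun c ⟨a, haA, _, _, hc⟩ =>
      ⟨a, haA, hc ▸ Set.subset_union_left⟩
    exact fun a ha => inter_subset_sqcupFam A B ⟨ha, hAB ha⟩

/-- Lemma 12 and its corollary: for families `A`, `B` of nonempty
subsets of `S`, `⌊A ⊔ B⌋ = ⌊(A ∩ B) ∪ ((A \ B) ⊔ (B \ A))⌋`; in particular if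
`A ⊆ B` then `⌊A ⊔ B⌋ = ⌊A⌋`. -/
theorem mins_sqcup {S : Type} (A B : Set (Set S))
    (hA : ∀ a ∈ A, a.Nonempty) (hB : ∀ b ∈ B, b.Nonempty) :
    mins (sqcupFam A B) = mins ((A ∩ B) ∪ sqcupFam (A \ B) (B \ A)) ∧
    (A ⊆ B → mins (sqcupFam A B) = mins A) :=
  mins_sqcup_general A B
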